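/- arXiv:2210.05562 — 2 statements merged into one kernel-verified Lean document; each statement's English description precedes it below -/
import Mathlib

section
/- Let A (arcs), T (time instants), and V (vehicles) be finite sets, and let c^f, c^u : A → ℝ with c^f(a) ≥ 0 and c^u(a) ≥ 0 for all a ∈ A. Let x : A × T × V → {0,1} and y : A × T → ℕ satisfy: for all a, t, v, if x(a,t,v) = 1 then y(a,t) ≥ 1 (a fixed-cost payment is incurred on every used time-space arc). Define the space projection X(a,v) = 1 if there exists t with x(a,t,v) = 1 (and 0 otherwise), and Y(a) = 1 if there exist t, v with x(a,t,v) = 1 (and 0 otherwise). Then Σ_{a∈A} c^f(a)·Y(a) + Σ_{a∈A} Σ_{v∈V} c^u(a)·X(a,v) ≤ Σ_{a∈A} Σ_{t∈T} c^f(a)·y(a,t) + Σ_{a∈A} Σ_{t∈T} Σ_{v∈V} c^u(a)·x(a,t,v). That is, the routing (fixed-charge network flow) objective evaluated on the space projection of any feasible time-space solution is at most the time-space objective; hence the optimal routing value is a lower bound on the optimal truck platooning value. -/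
open scoped Classical

/-- The routing (fixed-charge network flow) objective evaluated on the space
projection of any feasible time-space solution is at most the time-space
objective: the routing problem provides a lower bound for the platooning problem. -/
theorem routing_lower_bound
    {A T V : Type*} [Fintype A] [Fintype T] [Fintype V]
    (cf cu : A → ℝ) (hcf : ∀ a, 0 ≤ cf a) (hcu : ∀ a, 0 ≤ cu a)
    (x : A → T → V → ℕ) (y : A → T → ℕ)
    (hx01 : ∀ a t v, x a t v = 0 ∨ x a t v = 1)
    (hfix : ∀ a t v, x a t v = 1 → 1 ≤ y a t)
    (X : A → V → ℕ) (hX : ∀ a v, X a v = if ∃ t, x a t v = 1 then 1 else 0)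
    (Y : A → ℕ) (hY : ∀ a, Y a = if ∃ t v, x a t v = 1 then 1 else 0) :
    (∑ a : A, cf a * (Y a : ℝ)) + ∑ a : A, ∑ v : V, cu a * (X a v : ℝ) ≤
      (∑ a : A, ∑ t : T, cf a * (y a t : ℝ)) +
        ∑ a : A, ∑ t : T, ∑ v : V, cu a * (x a t v : ℝ) := by
  gcongr with a _ a _
  · -- fixed cost part
    rw [hY a]
    split_ifs with h
    · obtain ⟨t, v, ht⟩ := h
      have h1 : (1:ℝ) ≤ (y a t : ℝ) := by exact_mod_cast hfix a t v ht
      calc cf a * ((1:ℕ) : ℝ) ≤ cf a * (y a t : ℝ) := by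
            simpa using mul_le_mul_of_nonneg_left h1 (hcf a)
        _ ≤ ∑ t' : T, cf a * (y a t' : ℝ) :=
            Finset.single_le_sum (f := fun t' => cf a * (y a t' : ℝ))
              (fun t' _ => mul_nonneg (hcf a) (Nat.cast_nonneg _)) (Finset.mem_univ t)
    · simp only [Nat.cast_zero, mul_zero]
      exact Finset.sum_nonneg fun t _ => mul_nonneg (hcf a) (Nat.cast_nonneg _)
  · -- unit cost part
    rw [Finset.sum_comm]
    apply Finset.sum_le_sum
    intro v _
    rw [hX a v]
    split_ifs with h
    · obtain ⟨t, ht⟩ := h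
      calc cu a * ((1:ℕ) : ℝ) = cu a * (x a t v : ℝ) := by rw [ht]
        _ ≤ ∑ t' : T, cu a * (x a t' v : ℝ) :=
            Finset.single_le_sum (f := fun t' => cu a * (x a t' v : ℝ))
              (fun t' _ => mul_nonneg (hcu a) (Nat.cast_nonneg _)) (Finset.mem_univ t)
    · simp only [Nat.cast_zero, mul_zero]
      exact Finset.sum_nonneg fun t _ => mul_nonneg (by first | exact hcf a | exact hcu a) (Nat.cast_nonneg _)
end

section
/- Let V be a finite set of vehicles, Q ≥ 1 a natural number (the platoon size limit), and R a binary relation on V where R(v,w) means vehicle v is the direct leader of vehicle w in a platoon on a given arc. Suppose: (i) every vehicle has at most one leader, i.e. for every w the set {v : R(v,w)} has at most one element; (ii) every vehicle that has a leader has no followers, i.e. if R(u,v) holds for some u then R(v,w) fails for every w; and (iii) every vehicle has at most Q − 1 followers, i.e. for every v the set {w : R(v,w)} has at most Q − 1 elements. Then every connected component of the relation (every equivalence class of the equivalence relation generated by R) contains at most Q vehicles. In other words, the leader–follower constraints of the coordinated platooning formulation guarantee that every platoon consists of at most Q trucks. -/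
/-- If every vehicle has at most one direct leader, vehicles with a leader have
no followers, and every vehicle has at most `Q − 1` followers, then every
connected component of the leader–follower relation (equivalence class of the
generated equivalence relation) contains at most `Q` vehicles. -/
theorem platoon_size_bounded {V : Type*} [Fintype V] (Q : ℕ) (hQ : 1 ≤ Q)
    (R : V → V → Prop)
    (h_one_leader : ∀ w : V, {v : V | R v w}.Subsingleton)
    (h_follower_no_followers : ∀ u v : V, R u v → ∀ w : V, ¬ R v w)
    (h_max_followers : ∀ v : V, {w : V | R v w}.ncard ≤ Q - 1) :
    ∀ v : V, {w : V | Relation.EqvGen R v w}.ncard ≤ Q := by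
  classical
  -- the "shallow" relation
  set S : V → V → Prop := fun v w => w = v ∨ R v w ∨ R w v ∨ ∃ u, R u v ∧ R u w with hS
  have hSsymm : ∀ v w, S v w → S w v := by
    rintro v w (h | h | h | ⟨u, h1, h2⟩)
    · exact Or.inl h.symm
    · exact Or.inr (Or.inr (Or.inl h))
    · exact Or.inr (Or.inl h)
    · exact Or.inr (Or.inr (Or.inr ⟨u, h2, h1⟩))
  have hStrans : ∀ v w x, S v w → S w x → S v x := by
    rintro v w x (rfl | hvw | hwv | ⟨u, huv, huw⟩) h2
    · exact h2
    · rcases h2 with rfl | hwx | hxw | ⟨u, huw, hux⟩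
      · exact Or.inr (Or.inl hvw)
      · exact absurd hwx (h_follower_no_followers v w hvw x)
      · exact Or.inl (h_one_leader w hxw hvw)
      · exact Or.inr (Or.inl ((h_one_leader w huw hvw) ▸ hux))
    · rcases h2 with rfl | hwx | hxw | ⟨u, huw, hux⟩
      · exact Or.inr (Or.inr (Or.inl hwv))
      · exact Or.inr (Or.inr (Or.inr ⟨w, hwv, hwx⟩))
      · exact absurd hwv (h_follower_no_followers x w hxw v)
      · exact absurd hwv (h_follower_no_followers u w huw v)
    · rcases h2 with rfl | hwx | hxw | ⟨u', hu'w, hu'x⟩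
      · exact Or.inr (Or.inr (Or.inr ⟨u, huv, huw⟩))
      · exact absurd hwx (h_follower_no_followers u w huw x)
      · exact Or.inr (Or.inr (Or.inl ((h_one_leader w hxw huw) ▸ huv)))
      · exact Or.inr (Or.inr (Or.inr ⟨u, huv, (h_one_leader w hu'w huw) ▸ hu'x⟩))
  have key : ∀ v w, Relation.EqvGen R v w → S v w := by
    intro v w h
    induction h with
    | rel a b h => exact Or.inr (Or.inl h)
    | refl a => exact Or.inl rfl
    | symm a b _ ih => exact hSsymm a b ih
    | trans a b c _ _ ih1 ih2 => exact hStrans a b c ih1 ih2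
  intro v
  -- choose the root r of v's component
  by_cases hv : ∃ u, R u v
  · obtain ⟨r, hr⟩ := hv
    have hsub : {w : V | Relation.EqvGen R v w} ⊆ insert r {w : V | R r w} := by
      intro w hw
      rcases key v w hw with rfl | hvw | hwv | ⟨u, huv, huw⟩
      · exact Set.mem_insert_of_mem _ hr
      · exact absurd hvw (h_follower_no_followers r v hr w)
      · exact Set.mem_insert_iff.mpr (Or.inl (h_one_leader v hwv hr))
      · exact Set.mem_insert_of_mem _ (by
          have : u = r := h_one_leader v huv hr
          exact this ▸ huw)
    calc {w : V | Relation.EqvGen R v w}.ncard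
        ≤ (insert r {w : V | R r w}).ncard := Set.ncard_le_ncard hsub (Set.toFinite _)
      _ ≤ {w : V | R r w}.ncard + 1 := Set.ncard_insert_le _ _
      _ ≤ (Q - 1) + 1 := by have := h_max_followers r; omega
      _ = Q := by omega
  · push_neg at hv
    have hsub : {w : V | Relation.EqvGen R v w} ⊆ insert v {w : V | R v w} := by
      intro w hw
      rcases key v w hw with rfl | hvw | hwv | ⟨u, huv, _⟩
      · exact Set.mem_insert _ _
      · exact Set.mem_insert_of_mem _ hvw
      · exact absurd hwv (hv w)
      · exact absurd huv (hv u)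
    calc {w : V | Relation.EqvGen R v w}.ncard
        ≤ (insert v {w : V | R v w}).ncard := Set.ncard_le_ncard hsub (Set.toFinite _)
      _ ≤ {w : V | R v w}.ncard + 1 := Set.ncard_insert_le _ _
      _ ≤ (Q - 1) + 1 := by have := h_max_followers v; omega
      _ = Q := by omega
end
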